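/- arXiv:math/0112034 — 2 statements merged into one kernel-verified Lean document; each statement's English description precedes it below -/
import Mathlib

section
/- For all groves of planar binary trees A and B, σ(A + B) = σ(B) + σ(A), where σ is the involution given by reflection of trees. -/
/-- A planar binary tree: a leaf `|` or a grafting `x ∨ y`. -/
inductive PBT : Type
  | leaf : PBT
  | node : PBT → PBT → PBT
  deriving DecidableEq

namespace PBT

/-- The degree: number of internal vertices. -/
def deg : PBT → ℕ
  | leaf => 0
  | node l r => deg l + deg r + 1

/-- The set `Y n` of planar binary trees of degree `n`. -/
def Y (n : ℕ) : Set PBT := {t | t.deg = n}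

/-- The `over` operation `x / y`. -/
def over' : PBT → PBT → PBT
  | x, leaf => x
  | x, node yl yr => node (over' x yl) yr

/-- The `under` operation `x \ y`. -/
def under : PBT → PBT → PBT
  | leaf, y => y
  | node xl xr, y => node xl (under xr y)

/-- The Tamari order, generated by `(x ∨ y) ∨ z ≤ x ∨ (y ∨ z)` and compatibility
with grafting on both sides. -/
inductive tle : PBT → PBT → Prop
  | refl (x : PBT) : tle x x
  | trans {x y z : PBT} : tle x y → tle y z → tle x z
  | rotate (x y z : PBT) : tle (node (node x y) z) (node x (node y z))
  | node_left {x y : PBT} (z : PBT) : tle x y → tle (node x z) (node y z)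
  | node_right {x y : PBT} (z : PBT) : tle x y → tle (node z x) (node z y)

/-- The sum of two planar binary trees: the Tamari interval `[x/y, x\y]`
(a subset of `Y (deg x + deg y)`). -/
def sum (x y : PBT) : Set PBT := {z | tle (over' x y) z ∧ tle z (under x y)}

/-- A grove of degree `n`: a nonempty subset of `Y n`. -/
def Grove (n : ℕ) (A : Set PBT) : Prop := A.Nonempty ∧ ∀ x ∈ A, x.deg = n

/-- The sum of groves. -/
def gsum (A B : Set PBT) : Set PBT := ⋃ x ∈ A, ⋃ y ∈ B, sum x y

/-- The reflection involution σ. -/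
def σ : PBT → PBT
  | leaf => leaf
  | node l r => node (σ r) (σ l)

/-- The left sum `x ⊣ y` of trees (with the conventions `x ⊣ | = {x}`, `| ⊣ y = {|}`). -/
def lsum : PBT → PBT → Set PBT
  | x, leaf => {x}
  | leaf, _ => {leaf}
  | node xl xr, y => (fun z => node xl z) '' sum xr y

/-- The right sum `x ⊢ y` of trees (with the conventions `| ⊢ y = {y}`, `x ⊢ | = {|}`). -/
def rsum : PBT → PBT → Set PBT
  | leaf, y => {y}
  | _, leaf => {leaf}
  | x, node yl yr => (fun z => node z yr) '' sum x yl

/-- Left sum of groves. -/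
def glsum (A B : Set PBT) : Set PBT := ⋃ x ∈ A, ⋃ y ∈ B, lsum x y

/-- Right sum of groves. -/
def grsum (A B : Set PBT) : Set PBT := ⋃ x ∈ A, ⋃ y ∈ B, rsum x y

/-- Multiplication of a tree by a grove:
`| × B = {|}` and `(xˡ ∨ xʳ) × B = ((xˡ × B) ⊢ B) ⊣ (xʳ × B)`.
(The conventions `{|} ⊢ B = B` and `A ⊣ {|} = A` are built into `rsum`/`lsum`.) -/
def tmul : PBT → Set PBT → Set PBT
  | leaf, _ => {leaf}
  | node l r, B => glsum (grsum (tmul l B) B) (tmul r B)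

/-- Multiplication of groves. -/
def gmul (A B : Set PBT) : Set PBT := ⋃ x ∈ A, tmul x B

/-! Reflection reverses the Tamari order and exchanges `over'` and `under`, so it maps the
interval `[x / y, x \ y]` onto `[σ y / σ x, σ y \ σ x]`; taking unions gives the statement for
groves. -/

theorem sigma_involutive : Function.Involutive σ := by
  intro x
  induction x with
  | leaf => rfl
  | node l r ihl ihr => simp only [σ, ihl, ihr]

theorem sigma_under (x y : PBT) : σ (under x y) = over' (σ y) (σ x) := by
  induction x with
  | leaf => rfl
  | node xl xr _ ihr => simp only [under, σ, over', ihr]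

theorem sigma_over (x y : PBT) : σ (over' x y) = under (σ y) (σ x) := by
  induction y with
  | leaf => rfl
  | node yl yr ihl _ => simp only [over', σ, under, ihl]

theorem tle.sigma {x y : PBT} (h : tle x y) : tle (σ y) (σ x) := by
  induction h with
  | refl => exact tle.refl _
  | trans _ _ ih₁ ih₂ => exact ih₂.trans ih₁
  | rotate => exact tle.rotate _ _ _
  | node_left _ _ ih => exact ih.node_right _
  | node_right _ _ ih => exact ih.node_left _

theorem tle_sigma_iff {x y : PBT} : tle (σ x) (σ y) ↔ tle y x :=
  ⟨fun h => by simpa only [sigma_involutive _] using h.sigma, tle.sigma⟩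

theorem sigma_image_sum (x y : PBT) : σ '' sum x y = sum (σ y) (σ x) := by
  ext z
  rw [sigma_involutive.image_eq_preimage_symm]
  obtain ⟨w, rfl⟩ := sigma_involutive.surjective z
  simp only [Set.mem_preimage, sum, Set.mem_ofPred_eq, sigma_involutive w, ← sigma_under,
    ← sigma_over, tle_sigma_iff, and_comm]

end PBT

open PBT in
theorem sigma_gsum_general (A B : Set PBT) :
    σ '' gsum A B = gsum (σ '' B) (σ '' A) := by
  simp only [gsum, Set.image_iUnion₂, sigma_image_sum, Set.biUnion_image]
  exact Set.iUnion₂_comm _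

open PBT in
/-- for all groves `A`, `B`, `σ(A + B) = σ(B) + σ(A)`. -/
theorem sigma_gsum (n m : ℕ) (A B : Set PBT) (hA : Grove n A) (hB : Grove m B) :
    σ '' gsum A B = gsum (σ '' B) (σ '' A) :=
  sigma_gsum_general A B
end

section
/- For all planar binary trees x = x^l ∨ x^r and y = y^l ∨ y^r, both different from the leaf |, the left and right sums are Tamari intervals: x ⊣ y = { z : x^l ∨ (x^r / y) ≤ z ≤ x \ y } and x ⊢ y = { z : x / y ≤ z ≤ (x \ y^l) ∨ y^r }. -/
/-! Both sums are images of a Tamari interval under a grafting with one fixed subtree. Conversely, a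
tree `z` between `a ∨ b` and `a' ∨ b'` with `deg a = deg a'` is forced to be a grafting `c ∨ d` with
`a ≤ c ≤ a'` and `b ≤ d ≤ b'`: rotations can only shrink the left subtree of the root, and a step
that keeps its degree acts on the left or right subtree alone. Since the Tamari order is
antisymmetric, the fixed subtree (`xˡ` for `⊣`, `yʳ` for `⊢`) is recovered exactly. -/

namespace PBT

theorem deg_over (x y : PBT) : (over' x y).deg = x.deg + y.deg := by
  induction y with
  | leaf => rfl
  | node l r ihl _ => simp only [over', deg, ihl]; omega

theorem deg_under (x y : PBT) : (under x y).deg = x.deg + y.deg := by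
  induction x with
  | leaf => exact (Nat.zero_add _).symm
  | node l r _ ihr => simp only [under, deg, ihr]; omega

/-- A rotation `(x ∨ y) ∨ z ≤ x ∨ (y ∨ z)` lowers the weight by `deg x + 1`. -/
def weight : PBT → ℕ
  | leaf => 0
  | node l r => weight l + weight r + l.deg

def left : PBT → PBT
  | leaf => leaf
  | node l _ => l

def right : PBT → PBT
  | leaf => leaf
  | node _ r => r

namespace tle

theorem deg_eq {x y : PBT} (h : tle x y) : x.deg = y.deg := by
  induction h with
  | refl => rfl
  | trans _ _ ih₁ ih₂ => exact ih₁.trans ih₂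
  | rotate => simp only [deg]; omega
  | node_left _ _ ih => simp only [deg, ih]
  | node_right _ _ ih => simp only [deg, ih]

theorem eq_or_weight_lt {x y : PBT} (h : tle x y) : x = y ∨ y.weight < x.weight := by
  induction h with
  | refl => exact Or.inl rfl
  | trans _ _ ih₁ ih₂ =>
    rcases ih₁ with rfl | h₁
    · exact ih₂
    · rcases ih₂ with rfl | h₂
      · exact Or.inr h₁
      · exact Or.inr (h₂.trans h₁)
  | rotate => right; simp only [weight, deg]; omega
  | node_left _ h ih =>
    rcases ih with rfl | hlt
    · exact Or.inl rfl
    · right; simp only [weight, h.deg_eq]; omega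
  | node_right _ _ ih =>
    rcases ih with rfl | hlt
    · exact Or.inl rfl
    · right; simp only [weight]; omega

theorem antisymm {x y : PBT} (h₁ : tle x y) (h₂ : tle y x) : x = y := by
  rcases h₁.eq_or_weight_lt with hxy | hlt₁
  · exact hxy
  · rcases h₂.eq_or_weight_lt with hyx | hlt₂
    · exact hyx.symm
    · omega

theorem deg_left_le {u v : PBT} (h : tle u v) : v.left.deg ≤ u.left.deg := by
  induction h with
  | refl => exact le_rfl
  | trans _ _ ih₁ ih₂ => exact ih₂.trans ih₁
  | rotate => simp only [left, deg]; omega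
  | node_left _ h _ => exact h.deg_eq.ge
  | node_right => exact le_rfl

theorem left_right_of_deg_left_eq {u v : PBT} (h : tle u v) (hdeg : u.left.deg = v.left.deg) :
    tle u.left v.left ∧ tle u.right v.right := by
  induction h with
  | refl => exact ⟨refl _, refl _⟩
  | trans h₁ h₂ ih₁ ih₂ =>
    have hdeg₁ := le_antisymm h₁.deg_left_le (hdeg ▸ h₂.deg_left_le)
    obtain ⟨hl₁, hr₁⟩ := ih₁ hdeg₁.symm
    obtain ⟨hl₂, hr₂⟩ := ih₂ (hdeg₁.trans hdeg)
    exact ⟨hl₁.trans hl₂, hr₁.trans hr₂⟩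
  | rotate => simp only [left, deg] at hdeg; omega
  | node_left _ h _ => exact ⟨h, refl _⟩
  | node_right _ h _ => exact ⟨refl _, h⟩

end tle

theorem setOf_tle_tle_self (a : PBT) : {c | tle a c ∧ tle c a} = {a} := by
  ext c
  exact ⟨fun ⟨h₁, h₂⟩ => (h₁.antisymm h₂).symm, fun hc => hc ▸ ⟨.refl c, .refl c⟩⟩

theorem setOf_tle_node_tle_node {a b a' b' : PBT} (hdeg : a.deg = a'.deg) :
    {z | tle (node a b) z ∧ tle z (node a' b')} =
      Set.image2 node {c | tle a c ∧ tle c a'} {d | tle b d ∧ tle d b'} := by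
  ext z
  constructor
  · rintro ⟨h₁, h₂⟩
    cases z with
    | leaf => exact absurd h₁.deg_eq (Nat.succ_ne_zero _)
    | node c d =>
      have hc : a.deg = c.deg := le_antisymm (hdeg ▸ h₂.deg_left_le) h₁.deg_left_le
      obtain ⟨hac, hbd⟩ := h₁.left_right_of_deg_left_eq hc
      obtain ⟨hca, hdb⟩ := h₂.left_right_of_deg_left_eq (hc.symm.trans hdeg)
      exact ⟨c, ⟨hac, hca⟩, d, ⟨hbd, hdb⟩, rfl⟩
  · rintro ⟨c, ⟨hac, hca⟩, d, ⟨hbd, hdb⟩, rfl⟩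
    exact ⟨(hac.node_left b).trans (hbd.node_right c), (hca.node_left d).trans (hdb.node_right a')⟩

end PBT

open PBT in
/-- for `x = xˡ ∨ xʳ ≠ |` and `y = yˡ ∨ yʳ ≠ |`, the left and right
sums are the Tamari intervals
`x ⊣ y = [xˡ ∨ (xʳ / y), x \ y]` and `x ⊢ y = [x / y, (x \ yˡ) ∨ yʳ]`. -/
theorem lsum_rsum_intervals (xl xr yl yr : PBT) :
    lsum (node xl xr) (node yl yr) =
      {z | tle (node xl (xr.over' (node yl yr))) z ∧
           tle z ((node xl xr).under (node yl yr))} ∧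
    rsum (node xl xr) (node yl yr) =
      {z | tle ((node xl xr).over' (node yl yr)) z ∧
           tle z (node (((node xl xr).under yl)) yr)} := by
  constructor
  · rw [under, setOf_tle_node_tle_node rfl, setOf_tle_tle_self, Set.image2_singleton_left]
    rfl
  · have hdeg : ((node xl xr).over' yl).deg = ((node xl xr).under yl).deg := by
      rw [deg_over, deg_under]
    rw [over', setOf_tle_node_tle_node hdeg, setOf_tle_tle_self, Set.image2_singleton_right]
    rfl
end
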